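/- arXiv:1603.04938 — 3 statements merged into one kernel-verified Lean document; each statement's English description precedes it below -/
import Mathlib

section
/- Let H be a minimal counterexample (with respect to number of edges) to the statement 'every linear hypergraph with no rank-1 edges satisfies q(H) ≤ D(H) where D(H) = max_x ∑_{e ∋ x}(|e| − 1)'. Then for every edge e of H, removing e does not decrease D: D(H \ e) = D(H). -/
/-- An edge coloring of `E` with `k` colors: intersecting distinct edges get different colors. -/
def EdgeColorable {V : Type*} [DecidableEq V] (E : Finset (Finset V)) (k : ℕ) : Prop :=
  ∃ γ : Finset V → Fin k, ∀ e ∈ E, ∀ f ∈ E, e ≠ f → (e ∩ f).Nonempty → γ e ≠ γ f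

/-- `D(H)`: maximum clique degree. -/
def maxCliqueDegree {V : Type*} [Fintype V] [DecidableEq V] (E : Finset (Finset V)) : ℕ :=
  Finset.univ.sup (fun x : V => ∑ e ∈ E.filter (fun e => x ∈ e), (e.card - 1))

theorem maxCliqueDegree_mono {V : Type*} [Fintype V] [DecidableEq V]
    {E E' : Finset (Finset V)} (h : E' ⊆ E) :
    maxCliqueDegree E' ≤ maxCliqueDegree E := by
  apply Finset.sup_mono_fun
  intro x _
  exact Finset.sum_le_sum_of_subset (Finset.filter_subset_filter _ h)

/-- If `H` is a minimal counterexample (with respect to edge deletion) to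
`q(H) ≤ D(H)` for linear hypergraphs with no rank-1 edges, then deleting any
edge does not decrease `D`. -/
theorem minimal_counterexample_D_eq {V : Type*} [Fintype V] [DecidableEq V]
    (E : Finset (Finset V))
    (hlin : ∀ e ∈ E, ∀ f ∈ E, e ≠ f → (e ∩ f).card ≤ 1)
    (hrank : ∀ e ∈ E, 2 ≤ e.card)
    (hcex : ¬ EdgeColorable E (maxCliqueDegree E))
    (hmin : ∀ E' ⊂ E, EdgeColorable E' (maxCliqueDegree E')) :
    ∀ e ∈ E, maxCliqueDegree (E.erase e) = maxCliqueDegree E := by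
  intro e he
  have hsub : E.erase e ⊂ E := Finset.erase_ssubset he
  have hle : maxCliqueDegree (E.erase e) ≤ maxCliqueDegree E :=
    maxCliqueDegree_mono hsub.subset
  by_contra hne
  have hlt : maxCliqueDegree (E.erase e) < maxCliqueDegree E := lt_of_le_of_ne hle hne
  obtain ⟨γ, hγ⟩ := hmin _ hsub
  apply hcex
  refine ⟨fun f => if f = e then ⟨maxCliqueDegree (E.erase e), hlt⟩
    else ⟨(γ f : ℕ), lt_of_lt_of_le (γ f).isLt hle⟩, ?_⟩
  intro f hf g hg hfg hint
  by_cases hfe : f = e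
  · have hge : g ≠ e := by rw [hfe] at hfg; exact fun h => hfg h.symm
    simp only [hfe, if_pos rfl, if_neg hge]
    intro h
    have := (Fin.mk.injEq _ _ _ _).mp h
    exact absurd this.symm (Nat.ne_of_lt (γ g).isLt)
  · by_cases hge : g = e
    · simp only [if_neg hfe, hge, if_pos rfl]
      intro h
      have := (Fin.mk.injEq _ _ _ _).mp h
      exact absurd this (Nat.ne_of_lt (γ f).isLt)
    · simp only [if_neg hfe, if_neg hge]
      intro h
      have := (Fin.mk.injEq _ _ _ _).mp h
      exact hγ f (Finset.mem_erase.mpr ⟨hfe, hf⟩) g (Finset.mem_erase.mpr ⟨hge, hg⟩)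
        hfg hint (Fin.ext this)
end

section
/- Let H be a linear hypergraph with all edges of rank ≥ 2 such that q(H) > D(H) but q(H \ e) ≤ D(H) for every edge e, where D(H) = max_x ∑_{e ∋ x}(|e| − 1). Then every edge e satisfies R(e) = ∑_{x ∈ e}(d(x) − 1) ≥ D(H). -/
/-- If `q(H) > D(H)` but `q(H \ e) ≤ D(H)` for every edge `e`, then every edge `e`
has clique rank `R(e) = ∑_{x ∈ e} (d(x) - 1) ≥ D(H)`. -/
theorem critical_cliqueRank_ge {V : Type*} [Fintype V] [DecidableEq V]
    (E : Finset (Finset V))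
    (hlin : ∀ e ∈ E, ∀ f ∈ E, e ≠ f → (e ∩ f).card ≤ 1)
    (hrank : ∀ e ∈ E, 2 ≤ e.card)
    (hcex : ¬ EdgeColorable E (maxCliqueDegree E))
    (herase : ∀ e ∈ E, EdgeColorable (E.erase e) (maxCliqueDegree E)) :
    ∀ e ∈ E, maxCliqueDegree E ≤ ∑ x ∈ e, ((E.filter (fun f => x ∈ f)).card - 1) := by
  intro e he
  by_contra h
  push_neg at h
  obtain ⟨g, hg⟩ := herase e he
  set S := (E.erase e).filter (fun f => (e ∩ f).Nonempty) with hS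
  -- S has at most R(e) elements
  have hScard : S.card ≤ ∑ x ∈ e, ((E.filter (fun f => x ∈ f)).card - 1) := by
    have hsub : S ⊆ e.biUnion (fun x => (E.erase e).filter (fun f => x ∈ f)) := by
      intro f hf
      rw [hS, Finset.mem_filter] at hf
      obtain ⟨hf1, x, hx⟩ := hf
      rw [Finset.mem_inter] at hx
      exact Finset.mem_biUnion.2 ⟨x, hx.1, Finset.mem_filter.2 ⟨hf1, hx.2⟩⟩
    calc S.card ≤ (e.biUnion (fun x => (E.erase e).filter (fun f => x ∈ f))).card :=
          Finset.card_le_card hsub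
      _ ≤ ∑ x ∈ e, ((E.erase e).filter (fun f => x ∈ f)).card := Finset.card_biUnion_le
      _ ≤ ∑ x ∈ e, ((E.filter (fun f => x ∈ f)).card - 1) := by
          refine Finset.sum_le_sum fun x hx => ?_
          have : (E.erase e).filter (fun f => x ∈ f) = (E.filter (fun f => x ∈ f)).erase e := by
            ext f
            simp only [Finset.mem_filter, Finset.mem_erase]
            tauto
          rw [this, Finset.card_erase_of_mem (Finset.mem_filter.2 ⟨he, hx⟩)]
  have hlt : S.card < maxCliqueDegree E := lt_of_le_of_lt hScard h
  -- there is a color unused on S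
  have hexc : ∃ c : Fin (maxCliqueDegree E), ∀ f ∈ S, g f ≠ c := by
    by_contra hc
    push_neg at hc
    have hsurj : ∀ c : Fin (maxCliqueDegree E), c ∈ S.image g := by
      intro c
      obtain ⟨f, hf, hfc⟩ := hc c
      exact Finset.mem_image.2 ⟨f, hf, hfc⟩
    have : (Finset.univ : Finset (Fin (maxCliqueDegree E))).card ≤ (S.image g).card :=
      Finset.card_le_card fun c _ => hsurj c
    have : maxCliqueDegree E ≤ S.card := by
      simpa using this.trans Finset.card_image_le
    omega
  obtain ⟨c, hc⟩ := hexc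
  apply hcex
  refine ⟨Function.update g e c, ?_⟩
  intro a ha b hb hab hint
  by_cases hae : a = e
  · subst hae
    have hbe : b ≠ a := fun hh => hab hh.symm
    rw [Function.update_self, Function.update_of_ne hbe]
    have hbS : b ∈ S := Finset.mem_filter.2 ⟨Finset.mem_erase.2 ⟨hbe, hb⟩, hint⟩
    exact fun hh => hc b hbS hh.symm
  · by_cases hbe : b = e
    · subst hbe
      rw [Function.update_self, Function.update_of_ne hae]
      have haS : a ∈ S := Finset.mem_filter.2 ⟨Finset.mem_erase.2 ⟨hae, ha⟩, by
        rwa [Finset.inter_comm]⟩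
      exact hc a haS
    · rw [Function.update_of_ne hae, Function.update_of_ne hbe]
      exact hg a (Finset.mem_erase.2 ⟨hae, ha⟩) b (Finset.mem_erase.2 ⟨hbe, hb⟩) hab hint
end

section
/- Let H be a uniform rank-r linear hypergraph with an edge e such that R(e) ≤ R, where R(e) = ∑_{x ∈ e}(d(x)−1). Then the number T₂(e) of triangles (e, e', e'') whose edges meet pairwise at three distinct vertices satisfies T₂(e) ≤ R(r−1)²/2. -/
/-- In a uniform rank-`r` linear hypergraph, if `R(e) ≤ R`, then the number `T₂(e)`
of triangles through `e` meeting pairwise at three distinct vertices (half the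
number of ordered pairs `(e', e'')` forming such a triangle) is at most
`R (r-1)² / 2`. -/
theorem T2_bound {V : Type*} [Fintype V] [DecidableEq V]
    (E : Finset (Finset V)) (r : ℕ) (R : ℝ)
    (hlin : ∀ e ∈ E, ∀ f ∈ E, e ≠ f → (e ∩ f).card ≤ 1)
    (huniform : ∀ e ∈ E, e.card = r)
    (e : Finset V) (he : e ∈ E)
    (hR : ((∑ x ∈ e, ((E.filter (fun f => x ∈ f)).card - 1) : ℕ) : ℝ) ≤ R) :
    (((E ×ˢ E).filter (fun p =>
        p.1 ≠ p.2 ∧ p.1 ≠ e ∧ p.2 ≠ e ∧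
        ∃ x ∈ e ∩ p.1, ∃ y ∈ e ∩ p.2, ∃ z ∈ p.1 ∩ p.2,
          x ≠ y ∧ y ≠ z ∧ x ≠ z)).card : ℝ) / 2 ≤
      R * ((r : ℝ) - 1) ^ 2 / 2 := by
  classical
  set S := (E ×ˢ E).filter (fun p =>
        p.1 ≠ p.2 ∧ p.1 ≠ e ∧ p.2 ≠ e ∧
        ∃ x ∈ e ∩ p.1, ∃ y ∈ e ∩ p.2, ∃ z ∈ p.1 ∩ p.2,
          x ≠ y ∧ y ≠ z ∧ x ≠ z) with hS
  have hR0 : (0:ℝ) ≤ R := le_trans (by positivity) hR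
  have hsq : (((r - 1 : ℕ) : ℝ)) ^ 2 ≤ ((r : ℝ) - 1) ^ 2 := by
    rcases Nat.eq_zero_or_pos r with h0 | h1
    · subst h0; norm_num
    · have : ((r - 1 : ℕ) : ℝ) = (r : ℝ) - 1 := by
        push_cast [Nat.cast_sub h1]; ring
      rw [this]
  suffices hmain : (S.card : ℝ) ≤ R * ((r : ℝ) - 1) ^ 2 by linarith
  -- the set of edges ≠ e meeting e
  set A := E.filter (fun f => f ≠ e ∧ (e ∩ f).Nonempty) with hA
  -- A has at most ∑ (d(x) - 1) elements
  have hAcard : A.card ≤ ∑ x ∈ e, ((E.filter (fun f => x ∈ f)).card - 1) := by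
    have hsub : A ⊆ e.biUnion (fun x => (E.filter (fun f => x ∈ f)).erase e) := by
      intro f hf
      simp only [hA, Finset.mem_filter] at hf
      obtain ⟨hfE, hfe, x, hx⟩ := hf
      rw [Finset.mem_inter] at hx
      exact Finset.mem_biUnion.2 ⟨x, hx.1,
        Finset.mem_erase.2 ⟨hfe, Finset.mem_filter.2 ⟨hfE, hx.2⟩⟩⟩
    calc A.card ≤ _ := Finset.card_le_card hsub
      _ ≤ ∑ x ∈ e, ((E.filter (fun f => x ∈ f)).erase e).card :=
        Finset.card_biUnion_le
      _ = ∑ x ∈ e, ((E.filter (fun f => x ∈ f)).card - 1) := by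
        refine Finset.sum_congr rfl (fun x hx => ?_)
        rw [Finset.card_erase_of_mem (Finset.mem_filter.2 ⟨he, hx⟩)]
  by_cases hSne : S = ∅
  · rw [hSne]; simp only [Finset.card_empty, Nat.cast_zero]; positivity
  obtain ⟨p0, hp0⟩ := Finset.nonempty_iff_ne_empty.2 hSne
  have hp0' := Finset.mem_filter.1 hp0
  obtain ⟨x0, hx0, -⟩ := hp0'.2.2.2.2
  -- a default vertex
  have : Nonempty V := ⟨x0⟩
  set T := A.sigma (fun f => (e \ f) ×ˢ (f \ e)) with hT
  set φ : Finset V × Finset V → Σ _ : Finset V, V × V :=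
    fun p => if h : ∃ x ∈ e ∩ p.1, ∃ y ∈ e ∩ p.2, ∃ z ∈ p.1 ∩ p.2,
          x ≠ y ∧ y ≠ z ∧ x ≠ z then
        ⟨p.1, (h.choose_spec.2.choose, h.choose_spec.2.choose_spec.2.choose)⟩
      else ⟨p.1, (x0, x0)⟩ with hφ
  have key : ∀ p ∈ S, ∃ x y z : V,
      φ p = ⟨p.1, (y, z)⟩ ∧ x ∈ e ∩ p.1 ∧ y ∈ e ∩ p.2 ∧ z ∈ p.1 ∩ p.2 ∧
      x ≠ y ∧ y ≠ z ∧ x ≠ z := by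
    intro p hp
    have hp' := (Finset.mem_filter.1 hp).2.2.2.2
    refine ⟨hp'.choose, hp'.choose_spec.2.choose,
      hp'.choose_spec.2.choose_spec.2.choose, by simp only [hφ]; exact dif_pos hp',
      hp'.choose_spec.1, hp'.choose_spec.2.choose_spec.1,
      hp'.choose_spec.2.choose_spec.2.choose_spec.1,
      hp'.choose_spec.2.choose_spec.2.choose_spec.2⟩
  have hmaps : ∀ p ∈ S, φ p ∈ T := by
    intro p hp
    obtain ⟨x, y, z, hφp, hx, hy, hz, hxy, hyz, hxz⟩ := key p hp
    have hpS := Finset.mem_filter.1 hp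
    have hp1E : p.1 ∈ E := (Finset.mem_product.1 hpS.1).1
    have hp1e : p.1 ≠ e := hpS.2.2.1
    rw [Finset.mem_inter] at hx hy hz
    have hcard1 : (e ∩ p.1).card ≤ 1 := by
      simpa [Finset.inter_comm] using hlin p.1 hp1E e he hp1e
    rw [hφp, Finset.mem_sigma]
    refine ⟨Finset.mem_filter.2 ⟨hp1E, hp1e, ⟨x, Finset.mem_inter.2 hx⟩⟩, ?_⟩
    rw [Finset.mem_product]
    constructor
    · rw [Finset.mem_sdiff]
      refine ⟨hy.1, fun hyp1 => hxy ?_⟩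
      exact Finset.card_le_one.1 hcard1 _ (Finset.mem_inter.2 hx) _
        (Finset.mem_inter.2 ⟨hy.1, hyp1⟩)
    · rw [Finset.mem_sdiff]
      refine ⟨hz.1, fun hze => hxz ?_⟩
      exact Finset.card_le_one.1 hcard1 _ (Finset.mem_inter.2 hx) _
        (Finset.mem_inter.2 ⟨hze, hz.1⟩)
  have hinj : ∀ p ∈ S, ∀ q ∈ S, φ p = φ q → p = q := by
    intro p hp q hq hpq
    obtain ⟨xp, yp, zp, hφp, hxp, hyp, hzp, hxyp, hyzp, hxzp⟩ := key p hp
    obtain ⟨xq, yq, zq, hφq, hxq, hyq, hzq, hxyq, hyzq, hxzq⟩ := key q hq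
    rw [hφp, hφq] at hpq
    have h1 : p.1 = q.1 := congrArg Sigma.fst hpq
    have h2 : yp = yq ∧ zp = zq := by
      have h := eq_of_heq (Sigma.mk.inj_iff.1 hpq).2
      exact ⟨congrArg Prod.fst h, congrArg Prod.snd h⟩
    have hp2E : p.2 ∈ E := (Finset.mem_product.1 (Finset.mem_filter.1 hp).1).2
    have hq2E : q.2 ∈ E := (Finset.mem_product.1 (Finset.mem_filter.1 hq).1).2
    have h22 : p.2 = q.2 := by
      by_contra hne
      have hc := hlin p.2 hp2E q.2 hq2E hne
      rw [Finset.mem_inter] at hyp hzp hyq hzq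
      have hy2 : yp ∈ p.2 ∩ q.2 :=
        Finset.mem_inter.2 ⟨hyp.2, h2.1 ▸ hyq.2⟩
      have hz2 : zp ∈ p.2 ∩ q.2 :=
        Finset.mem_inter.2 ⟨hzp.2, by rw [h2.2]; exact hzq.2⟩
      exact hyzp (Finset.card_le_one.1 hc _ hy2 _ hz2)
    exact Prod.ext h1 h22
  have hcardT : S.card ≤ T.card := Finset.card_le_card_of_injOn φ hmaps hinj
  have hTcard : T.card ≤ A.card * (r - 1) ^ 2 := by
    rw [hT, Finset.card_sigma]
    calc ∑ f ∈ A, ((e \ f) ×ˢ (f \ e)).card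
        ≤ ∑ _f ∈ A, (r - 1) ^ 2 := by
          refine Finset.sum_le_sum (fun f hf => ?_)
          simp only [hA, Finset.mem_filter] at hf
          obtain ⟨hfE, hfe, hne⟩ := hf
          have h1 : (e ∩ f).card ≥ 1 := Finset.card_pos.2 hne
          have hef : (e \ f).card ≤ r - 1 := by
            rw [← Finset.sdiff_inter_self_left e f,
              Finset.card_sdiff_of_subset (Finset.inter_subset_left), huniform e he]
            omega
          have hfe' : (f \ e).card ≤ r - 1 := by
            rw [← Finset.sdiff_inter_self_left f e,
              Finset.card_sdiff_of_subset (Finset.inter_subset_left), huniform f hfE]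
            have : (f ∩ e).card = (e ∩ f).card := by rw [Finset.inter_comm]
            omega
          rw [Finset.card_product, sq]
          exact Nat.mul_le_mul hef hfe'
      _ = A.card * (r - 1) ^ 2 := by rw [Finset.sum_const, smul_eq_mul]
  have hnat : S.card ≤ (∑ x ∈ e, ((E.filter (fun f => x ∈ f)).card - 1)) * (r - 1) ^ 2 :=
    le_trans hcardT (le_trans hTcard (Nat.mul_le_mul_right _ hAcard))
  have hreal : (S.card : ℝ) ≤
      ((∑ x ∈ e, ((E.filter (fun f => x ∈ f)).card - 1) : ℕ) : ℝ) * (((r - 1 : ℕ) : ℝ)) ^ 2 := by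
    exact_mod_cast hnat
  have hsum0 : (0:ℝ) ≤ ((∑ x ∈ e, ((E.filter (fun f => x ∈ f)).card - 1) : ℕ) : ℝ) := by
    positivity
  nlinarith [sq_nonneg (((r - 1 : ℕ) : ℝ)), sq_nonneg ((r:ℝ) - 1)]
end
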